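/- Let ε, r ∈ (0,1) with ε + r < 1, set γ = (1+εr)/2 and C = r/((ε+r)·Γ(1−ε−r)). If a real sequence (y_t)_{t≥1} satisfies y_1 = 1 and y_{t+1} = (1 + 2γ/t)·y_t + C·Γ(t+1−ε−r)/Γ(t+1) + ε/(ε+r) for all t ≥ 1, then lim_{t→∞} y_t / t^{1+εr} = (1/Γ(1+εr))·[1/(r(ε+r)) + r/((ε+r)(ε+r+εr))]. -/

import Mathlib

/-!
For `a = 2γ = 1 + εr` and `b = 1 - ε - r`, the ratios `Γ(t + s) / Γ(t)` solve
`R(t + 1) = (1 + s/t) R(t)`, so the recurrence is solved in closed form by a multiple of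
`Γ(t + a) / Γ(t)` (homogeneous part), a multiple of `Γ(t + b) / Γ(t)` (Gamma forcing) and a
multiple of `t` (constant forcing). By Euler's limit formula `Γ(t + s) / Γ(t) ~ t^s`, and since
`b < a` and `1 < a` only the homogeneous part survives after division by `t^a`; its coefficient
is fixed by `y 1 = 1`.
-/

open Real Filter Topology

noncomputable def gammaRatio (s t : ℝ) : ℝ := Gamma (t + s) / Gamma t

theorem gammaRatio_add_one {s t : ℝ} (ht : t ≠ 0) (hts : t + s ≠ 0) :
    gammaRatio s (t + 1) = (1 + s / t) * gammaRatio s t := by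
  rw [gammaRatio, gammaRatio, add_right_comm, Gamma_add_one hts, Gamma_add_one ht,
    mul_div_mul_comm, add_div, div_self ht]

theorem Gamma_add_natCast_add_one {s : ℝ} (hs : 0 < s) (n : ℕ) :
    Gamma (s + n + 1) = Gamma s * ∏ j ∈ Finset.range (n + 1), (s + j) := by
  induction n with
  | zero => simp [Gamma_add_one hs.ne', mul_comm]
  | succ n ih =>
    rw [Finset.prod_range_succ, ← mul_assoc, ← ih, Nat.cast_succ, ← add_assoc,
      Gamma_add_one (by positivity), mul_comm]

theorem Gamma_div_GammaSeq {s : ℝ} (hs : 0 < s) (n : ℕ) :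
    Gamma s / GammaSeq s n = gammaRatio s (n + 1) / (n : ℝ) ^ s := by
  rw [GammaSeq, gammaRatio, add_comm ((n : ℝ) + 1) s, ← add_assoc,
    Gamma_add_natCast_add_one hs, Gamma_nat_eq_factorial, div_div_eq_mul_div, div_div,
    mul_comm ((n : ℝ) ^ s)]

theorem tendsto_gammaRatio_div_rpow {s : ℝ} (hs : 0 < s) :
    Tendsto (fun n : ℕ => gammaRatio s n / (n : ℝ) ^ s) atTop (𝓝 1) := by
  rw [← tendsto_add_atTop_iff_nat 1]
  have hΓ : Gamma s ≠ 0 := (Gamma_pos_of_pos hs).ne'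
  have hEuler : Tendsto (fun n : ℕ => Gamma s / GammaSeq s n) atTop (𝓝 1) := by
    have h := (tendsto_const_nhds (x := Gamma s)).div (GammaSeq_tendsto_Gamma s) hΓ
    rw [div_self hΓ] at h
    exact h
  have hshift : Tendsto (fun n : ℕ => ((n : ℝ) / (n + 1)) ^ s) atTop (𝓝 1) := by
    simpa [Function.comp_def] using ((continuous_rpow_const hs.le).tendsto 1).comp
      (tendsto_natCast_div_add_atTop (1 : ℝ))
  have hlim := hEuler.mul hshift
  rw [one_mul] at hlim
  refine hlim.congr' ?_
  filter_upwards [eventually_ge_atTop 1] with n hn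
  have hn : (0 : ℝ) < n := by exact_mod_cast hn
  rw [Gamma_div_GammaSeq hs, div_rpow hn.le (by positivity),
    div_mul_div_cancel₀ (rpow_pos_of_pos hn s).ne', Nat.cast_succ]

theorem tendsto_natCast_rpow_of_neg {p : ℝ} (hp : p < 0) :
    Tendsto (fun n : ℕ => (n : ℝ) ^ p) atTop (𝓝 0) := by
  simpa [Function.comp_def] using
    (tendsto_rpow_neg_atTop (neg_pos.mpr hp)).comp tendsto_natCast_atTop_atTop

theorem tendsto_gammaRatio_div_rpow_of_lt {s a : ℝ} (hs : 0 < s) (hsa : s < a) :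
    Tendsto (fun n : ℕ => gammaRatio s n / (n : ℝ) ^ a) atTop (𝓝 0) := by
  have hlim := (tendsto_gammaRatio_div_rpow hs).mul
    (tendsto_natCast_rpow_of_neg (sub_neg.mpr hsa))
  rw [one_mul] at hlim
  refine hlim.congr' ?_
  filter_upwards [eventually_gt_atTop 0] with n hn
  have hn : (0 : ℝ) < n := by exact_mod_cast hn
  rw [rpow_sub hn, div_mul_div_cancel₀ (rpow_pos_of_pos hn s).ne']

theorem eq_gammaRatio_combination_of_recurrence {a b c D : ℝ} (ha : -1 < a) (hb : -1 < b)
    (ha1 : a ≠ 1) (hab : a ≠ b) {y : ℕ → ℝ} (hrec : ∀ t : ℕ, 1 ≤ t →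
      y (t + 1) = (1 + a / t) * y t + D * Gamma (t + b) / Gamma (t + 1) + c)
    {t : ℕ} (ht : 1 ≤ t) :
    y t = (y 1 - D / (b - a) * Gamma (1 + b) - c / (1 - a)) / Gamma (1 + a) * gammaRatio a t
      + D / (b - a) * gammaRatio b t + c / (1 - a) * t := by
  induction t, ht using Nat.le_induction with
  | base =>
    have hΓ : Gamma (1 + a) ≠ 0 := (Gamma_pos_of_pos (by linarith)).ne'
    rw [Nat.cast_one, gammaRatio, gammaRatio, Gamma_one, div_one, div_one,
      div_mul_cancel₀ _ hΓ]
    ring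
  | succ t ht ih =>
    have ht1 : (1 : ℝ) ≤ t := by exact_mod_cast ht
    have ht0 : (0 : ℝ) < t := by linarith
    have hforcing : Gamma (t + b) / Gamma (t + 1) = gammaRatio b t / t := by
      rw [gammaRatio, Gamma_add_one ht0.ne', div_div, mul_comm]
    rw [hrec t ht, ih, mul_div_assoc, hforcing, Nat.cast_succ,
      gammaRatio_add_one ht0.ne' (by linarith), gammaRatio_add_one ht0.ne' (by linarith)]
    have hba : b - a ≠ 0 := sub_ne_zero.mpr hab.symm
    have h1a : 1 - a ≠ 0 := sub_ne_zero.mpr ha1.symm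
    field_simp
    ring

theorem tendsto_gammaRatio_combination_div_rpow {a b A K L : ℝ} (hb : 0 < b) (hba : b < a)
    (ha : 1 < a) :
    Tendsto (fun n : ℕ => (A * gammaRatio a n + K * gammaRatio b n + L * n) / (n : ℝ) ^ a)
      atTop (𝓝 A) := by
  have hlin : Tendsto (fun n : ℕ => (n : ℝ) / (n : ℝ) ^ a) atTop (𝓝 0) := by
    refine (tendsto_natCast_rpow_of_neg (sub_neg.mpr ha)).congr' ?_
    filter_upwards [eventually_gt_atTop 0] with n hn
    rw [rpow_sub (by exact_mod_cast hn), rpow_one]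
  have hlim := ((tendsto_gammaRatio_div_rpow (by linarith : 0 < a)).const_mul A).add
    (((tendsto_gammaRatio_div_rpow_of_lt hb hba).const_mul K).add (hlin.const_mul L))
  simp only [mul_one, mul_zero, add_zero] at hlim
  refine hlim.congr fun n => ?_
  simp only [add_div, mul_div_assoc, add_assoc]

theorem erws_amplitude_eq {ε r : ℝ} (hε : 0 < ε) (hr : 0 < r) (hsum : ε + r < 1) :
    (1 - r / ((ε + r) * Gamma (1 - ε - r)) / (1 - ε - r - (1 + ε * r))
      * Gamma (1 + (1 - ε - r)) - ε / (ε + r) / (1 - (1 + ε * r))) / Gamma (1 + (1 + ε * r)) =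
    1 / Gamma (1 + ε * r) * (1 / (r * (ε + r)) + r / ((ε + r) * (ε + r + ε * r))) := by
  have hb : 0 < 1 - ε - r := by linarith
  have hεr : 0 < ε * r := mul_pos hε hr
  have hΓb : Gamma (1 - ε - r) ≠ 0 := (Gamma_pos_of_pos hb).ne'
  have hΓa : Gamma (1 + ε * r) ≠ 0 := (Gamma_pos_of_pos (by linarith)).ne'
  rw [add_comm 1 (1 - ε - r), Gamma_add_one hb.ne', add_comm 1 (1 + ε * r),
    Gamma_add_one (by linarith), show 1 - ε - r - (1 + ε * r) = -(ε + r + ε * r) by ring,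
    show 1 - (1 + ε * r) = -(ε * r) by ring]
  field_simp
  ring

theorem erws_residual_superdiffusivity (ε r : ℝ) (hε : ε ∈ Set.Ioo (0:ℝ) 1)
    (hr : r ∈ Set.Ioo (0:ℝ) 1) (hsum : ε + r < 1)
    (γ : ℝ) (hγ : γ = (1 + ε * r) / 2)
    (C : ℝ) (hC : C = r / ((ε + r) * Real.Gamma (1 - ε - r)))
    (y : ℕ → ℝ) (hy1 : y 1 = 1)
    (hrec : ∀ t : ℕ, 1 ≤ t → y (t + 1) = (1 + 2 * γ / t) * y t
      + C * Real.Gamma ((t : ℝ) + 1 - ε - r) / Real.Gamma ((t : ℝ) + 1) + ε / (ε + r)) :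
    Tendsto (fun t : ℕ => y t / (t : ℝ) ^ (1 + ε * r)) atTop
      (nhds ((1 / Real.Gamma (1 + ε * r)) *
        (1 / (r * (ε + r)) + r / ((ε + r) * (ε + r + ε * r))))) := by
  obtain ⟨hε, -⟩ := hε
  obtain ⟨hr, -⟩ := hr
  have hb : 0 < 1 - ε - r := by linarith
  have hba : 1 - ε - r < 1 + ε * r := by nlinarith
  have ha : 1 < 1 + ε * r := by nlinarith
  have hshift : ∀ t : ℝ, t + 1 - ε - r = t + (1 - ε - r) := fun t => by ring
  simp only [hγ, mul_div_cancel₀ _ (two_ne_zero' ℝ), hshift] at hrec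
  rw [← erws_amplitude_eq hε hr hsum]
  refine (tendsto_gammaRatio_combination_div_rpow (K := C / (1 - ε - r - (1 + ε * r)))
    (L := ε / (ε + r) / (1 - (1 + ε * r))) hb hba ha).congr' ?_
  filter_upwards [eventually_ge_atTop 1] with t ht
  rw [eq_gammaRatio_combination_of_recurrence (by linarith) (by linarith) ha.ne' hba.ne' hrec ht,
    hy1, hC]
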